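/- arXiv:2209.03811 — 5 statements merged into one kernel-verified Lean document; each statement's English description precedes it below -/
import Mathlib

section
/- Let f_i : ℝ^d × ℝ^d → ℝ for i = 1,…,n be continuously differentiable in their first argument, with gradients ∇f_i taken with respect to the first argument. Assume that for every fixed θ̄ ∈ ℝ^d the average f(·; θ̄) = (1/n)Σ_{i=1}^n f_i(·; θ̄) is μ-strongly convex (μ > 0), and that for every i and all θ₀, θ, θ′ ∈ ℝ^d one has ‖∇f_i(θ₀; θ) − ∇f_i(θ₀; θ′)‖ ≤ L ε_i ‖θ − θ′‖, where L > 0 and ε_1,…,ε_n > 0. Then the map M(θ) = argmin_{θ′ ∈ ℝ^d} (1/n)Σ_{i=1}^n f_i(θ′; θ) is well defined (the minimizer exists and is unique) and satisfies ‖M(θ) − M(θ′)‖ ≤ (ε_avg L / μ) ‖θ − θ′‖ for all θ, θ′ ∈ ℝ^d, where ε_avg = (1/n)Σ_{i=1}^n ε_i. -/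
open Finset

/-- Well-definedness and Lipschitz continuity of the deployment map
`M(θ) = argmin_{θ'} (1/n) Σ_i f_i(θ'; θ)`. -/
theorem stmt0 {d : ℕ} {ι : Type*} [Fintype ι] [Nonempty ι]
    (f : ι → EuclideanSpace ℝ (Fin d) → EuclideanSpace ℝ (Fin d) → ℝ)
    (g : ι → EuclideanSpace ℝ (Fin d) → EuclideanSpace ℝ (Fin d) → EuclideanSpace ℝ (Fin d))
    (μ L : ℝ) (ε : ι → ℝ)
    (hμ : 0 < μ) (hL : 0 < L) (hε : ∀ i, 0 < ε i)
    -- each `f i` is continuously differentiable in its first argument with gradient `g i`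
    (hgrad : ∀ i θb θ, HasGradientAt (fun x => f i x θb) (g i θ θb) θ)
    (hgradcont : ∀ i θb, Continuous fun θ => g i θ θb)
    -- for every fixed `θb`, the average `f(·; θb)` is `μ`-strongly convex
    (hsc : ∀ θb θ θ',
      (Fintype.card ι : ℝ)⁻¹ * ∑ i, f i θ' θb ≥
        (Fintype.card ι : ℝ)⁻¹ * ∑ i, f i θ θb
          + (inner ℝ ((Fintype.card ι : ℝ)⁻¹ • ∑ i, g i θ θb) (θ' - θ) : ℝ)
          + μ / 2 * ‖θ' - θ‖ ^ 2)
    -- sensitivity of the gradients in the second (deployed) argument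
    (hsens : ∀ i θ₀ θ θ', ‖g i θ₀ θ - g i θ₀ θ'‖ ≤ L * ε i * ‖θ - θ'‖) :
    ∃ M : EuclideanSpace ℝ (Fin d) → EuclideanSpace ℝ (Fin d),
      (∀ θ, IsMinOn (fun θ' => (Fintype.card ι : ℝ)⁻¹ * ∑ i, f i θ' θ) Set.univ (M θ) ∧
        ∀ θ'', IsMinOn (fun θ' => (Fintype.card ι : ℝ)⁻¹ * ∑ i, f i θ' θ) Set.univ θ'' →
          θ'' = M θ) ∧
      ∀ θ θ', ‖M θ - M θ'‖ ≤ ((Fintype.card ι : ℝ)⁻¹ * ∑ i, ε i) * L / μ * ‖θ - θ'‖ := by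
  classical
  have hc0 : (0 : ℝ) < (Fintype.card ι : ℝ)⁻¹ :=
    inv_pos.mpr (by exact_mod_cast Fintype.card_pos)
  -- gradient of the average
  have hFgrad : ∀ θb x : EuclideanSpace ℝ (Fin d),
      HasGradientAt (fun x => (Fintype.card ι : ℝ)⁻¹ * ∑ i, f i x θb)
        ((Fintype.card ι : ℝ)⁻¹ • ∑ i, g i x θb) x := by
    intro θb x
    rw [hasGradientAt_iff_hasFDerivAt]
    have h1 : HasFDerivAt (fun x => ∑ i, f i x θb)
        (∑ i : ι, (InnerProductSpace.toDual ℝ (EuclideanSpace ℝ (Fin d))) (g i x θb)) x :=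
      HasFDerivAt.fun_sum fun i _ => (hgrad i θb x).hasFDerivAt
    have h2 := h1.const_mul (Fintype.card ι : ℝ)⁻¹
    convert h2 using 1
    · rfl
    rw [map_smulₛₗ, map_sum]; simp
  -- continuity of the average
  have hFcont : ∀ θb, Continuous (fun x => (Fintype.card ι : ℝ)⁻¹ * ∑ i, f i x θb) := by
    intro θb
    exact Differentiable.continuous fun x => (hFgrad θb x).hasFDerivAt.differentiableAt
  -- existence of a minimizer
  have hmin : ∀ θb, ∃ x : EuclideanSpace ℝ (Fin d), ∀ y,
      (Fintype.card ι : ℝ)⁻¹ * ∑ i, f i x θb ≤ (Fintype.card ι : ℝ)⁻¹ * ∑ i, f i y θb := by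
    intro θb
    apply (hFcont θb).exists_forall_le
    set C : ℝ := ‖(Fintype.card ι : ℝ)⁻¹ • ∑ i, g i (0 : EuclideanSpace ℝ (Fin d)) θb‖ with hC
    set F0 : ℝ := (Fintype.card ι : ℝ)⁻¹ * ∑ i, f i (0 : EuclideanSpace ℝ (Fin d)) θb with hF0
    have hkey : ∀ y : EuclideanSpace ℝ (Fin d),
        F0 - C * ‖y‖ + μ / 2 * ‖y‖ ^ 2 ≤ (Fintype.card ι : ℝ)⁻¹ * ∑ i, f i y θb := by
      intro y
      have h := hsc θb 0 y
      rw [ge_iff_le] at h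
      simp only [sub_zero] at h
      have hip : -(C * ‖y‖) ≤
          (inner ℝ ((Fintype.card ι : ℝ)⁻¹ • ∑ i, g i (0 : EuclideanSpace ℝ (Fin d)) θb) y : ℝ) := by
        have h1 := abs_real_inner_le_norm
          ((Fintype.card ι : ℝ)⁻¹ • ∑ i, g i (0 : EuclideanSpace ℝ (Fin d)) θb) y
        have h2 := neg_abs_le
          (inner ℝ ((Fintype.card ι : ℝ)⁻¹ • ∑ i, g i (0 : EuclideanSpace ℝ (Fin d)) θb) y : ℝ)
        rw [hC]; linarith
      linarith
    have hpoly : Filter.Tendsto (fun y : EuclideanSpace ℝ (Fin d) =>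
        F0 - C * ‖y‖ + μ / 2 * ‖y‖ ^ 2) (Filter.cocompact _) Filter.atTop := by
      have hq : Filter.Tendsto (fun t : ℝ => F0 - C * t + μ / 2 * t ^ 2)
          Filter.atTop Filter.atTop := by
        have h : Filter.Tendsto (fun t : ℝ => t * (μ / 2 * t - C) + F0)
            Filter.atTop Filter.atTop := by
          apply Filter.tendsto_atTop_add_const_right
          apply Filter.Tendsto.atTop_mul_atTop₀ Filter.tendsto_id
          apply Filter.tendsto_atTop_add_const_right
          exact Filter.Tendsto.const_mul_atTop (by linarith) Filter.tendsto_id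
        convert h using 2 with t
        ring
      exact hq.comp tendsto_norm_cocompact_atTop
    exact Filter.tendsto_atTop_mono hkey hpoly
  choose M hM using hmin
  -- gradient vanishes at the minimizer
  have hGzero : ∀ θb, (Fintype.card ι : ℝ)⁻¹ • ∑ i, g i (M θb) θb = 0 := by
    intro θb
    have hloc : IsLocalMin (fun x => (Fintype.card ι : ℝ)⁻¹ * ∑ i, f i x θb) (M θb) :=
      Filter.Eventually.of_forall (hM θb)
    have h0 := hloc.hasFDerivAt_eq_zero (hFgrad θb (M θb)).hasFDerivAt
    simpa using (InnerProductSpace.toDual ℝ (EuclideanSpace ℝ (Fin d))).map_eq_zero_iff.mp h0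
  refine ⟨M, fun θ => ⟨isMinOn_iff.mpr fun y _ => hM θ y, ?_⟩, ?_⟩
  · -- uniqueness
    intro y hy
    have h := hsc θ (M θ) y
    rw [hGzero θ] at h
    simp only [inner_zero_left] at h
    have h1 : (Fintype.card ι : ℝ)⁻¹ * ∑ i, f i y θ ≤ (Fintype.card ι : ℝ)⁻¹ * ∑ i, f i (M θ) θ :=
      isMinOn_iff.mp hy (M θ) (Set.mem_univ _)
    rw [ge_iff_le] at h
    have h2 : ‖y - M θ‖ ^ 2 ≤ 0 := by nlinarith
    have h3 : y - M θ = 0 := by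
      rw [← norm_eq_zero]
      nlinarith [norm_nonneg (y - M θ)]
    rwa [sub_eq_zero] at h3
  · -- Lipschitz bound
    intro θ θ'
    have h1 := hsc θ (M θ) (M θ')
    have h2 := hsc θ (M θ') (M θ)
    rw [hGzero θ] at h1
    simp only [inner_zero_left] at h1
    rw [ge_iff_le] at h1 h2
    have hnn : ‖M θ' - M θ‖ = ‖M θ - M θ'‖ := norm_sub_rev _ _
    -- μ ‖Mθ - Mθ'‖² ≤ ⟨G θ (Mθ'), Mθ' - Mθ⟩
    have hkey : μ * ‖M θ - M θ'‖ ^ 2 ≤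
        (inner ℝ ((Fintype.card ι : ℝ)⁻¹ • ∑ i, g i (M θ') θ) (M θ' - M θ) : ℝ) := by
      have e3 : (inner ℝ ((Fintype.card ι : ℝ)⁻¹ • ∑ i, g i (M θ') θ) (M θ - M θ') : ℝ)
          = -(inner ℝ ((Fintype.card ι : ℝ)⁻¹ • ∑ i, g i (M θ') θ) (M θ' - M θ) : ℝ) := by
        rw [← inner_neg_right]; congr 1; abel
      rw [e3] at h2
      rw [hnn] at h1
      linarith
    -- bound gradient norm via sensitivity
    have hgbound : ‖(Fintype.card ι : ℝ)⁻¹ • ∑ i, g i (M θ') θ‖ ≤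
        ((Fintype.card ι : ℝ)⁻¹ * ∑ i, ε i) * L * ‖θ - θ'‖ := by
      have e : (Fintype.card ι : ℝ)⁻¹ • ∑ i, g i (M θ') θ
          = (Fintype.card ι : ℝ)⁻¹ • ∑ i : ι, (g i (M θ') θ - g i (M θ') θ') := by
        rw [Finset.sum_sub_distrib, smul_sub]
        rw [show (Fintype.card ι : ℝ)⁻¹ • ∑ i, g i (M θ') θ' = 0 from hGzero θ', sub_zero]
      rw [e, norm_smul, Real.norm_eq_abs, abs_of_pos hc0]
      have hb : ‖∑ i : ι, (g i (M θ') θ - g i (M θ') θ')‖ ≤ ∑ i : ι, (L * ε i * ‖θ - θ'‖) :=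
        (norm_sum_le _ _).trans (Finset.sum_le_sum fun i _ => hsens i (M θ') θ θ')
      calc (Fintype.card ι : ℝ)⁻¹ * ‖∑ i : ι, (g i (M θ') θ - g i (M θ') θ')‖
          ≤ (Fintype.card ι : ℝ)⁻¹ * ∑ i : ι, (L * ε i * ‖θ - θ'‖) :=
            mul_le_mul_of_nonneg_left hb hc0.le
        _ = ((Fintype.card ι : ℝ)⁻¹ * ∑ i, ε i) * L * ‖θ - θ'‖ := by
            simp only [Finset.mul_sum, Finset.sum_mul]
            exact Finset.sum_congr rfl fun i _ => by ring
    have hCS : (inner ℝ ((Fintype.card ι : ℝ)⁻¹ • ∑ i, g i (M θ') θ) (M θ' - M θ) : ℝ)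
        ≤ ‖(Fintype.card ι : ℝ)⁻¹ • ∑ i, g i (M θ') θ‖ * ‖M θ' - M θ‖ :=
      real_inner_le_norm _ _
    rcases eq_or_lt_of_le (norm_nonneg (M θ - M θ')) with h0 | h0
    · rw [← h0]
      have : (0:ℝ) ≤ ((Fintype.card ι : ℝ)⁻¹ * ∑ i, ε i) * L / μ * ‖θ - θ'‖ := by
        have hεs : (0:ℝ) ≤ ∑ i, ε i := Finset.sum_nonneg fun i _ => (hε i).le
        positivity
      exact this
    · have hchain : μ * ‖M θ - M θ'‖ ^ 2 ≤
          ((Fintype.card ι : ℝ)⁻¹ * ∑ i, ε i) * L * ‖θ - θ'‖ * ‖M θ - M θ'‖ := by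
        calc μ * ‖M θ - M θ'‖ ^ 2
            ≤ ‖(Fintype.card ι : ℝ)⁻¹ • ∑ i, g i (M θ') θ‖ * ‖M θ' - M θ‖ := le_trans hkey hCS
          _ = ‖(Fintype.card ι : ℝ)⁻¹ • ∑ i, g i (M θ') θ‖ * ‖M θ - M θ'‖ := by rw [hnn]
          _ ≤ ((Fintype.card ι : ℝ)⁻¹ * ∑ i, ε i) * L * ‖θ - θ'‖ * ‖M θ - M θ'‖ :=
            mul_le_mul_of_nonneg_right hgbound (norm_nonneg _)
      have hfin : μ * ‖M θ - M θ'‖ ≤ ((Fintype.card ι : ℝ)⁻¹ * ∑ i, ε i) * L * ‖θ - θ'‖ := by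
        nlinarith
      rw [div_mul_eq_mul_div, le_div_iff₀ hμ]
      nlinarith
end

section
/- Let f_i : ℝ^d × ℝ^d → ℝ for i = 1,…,n be continuously differentiable in their first argument, with gradients ∇f_i taken with respect to the first argument. Assume that for every fixed θ̄ ∈ ℝ^d the average f(·; θ̄) = (1/n)Σ_{i=1}^n f_i(·; θ̄) is μ-strongly convex (μ > 0), and that for every i and all θ₀, θ, θ′ ∈ ℝ^d one has ‖∇f_i(θ₀; θ) − ∇f_i(θ₀; θ′)‖ ≤ L ε_i ‖θ − θ′‖ with L > 0, ε_i > 0. If ε_avg = (1/n)Σ_{i=1}^n ε_i < μ/L, then the map M(θ) = argmin_{θ′ ∈ ℝ^d} (1/n)Σ_{i=1}^n f_i(θ′; θ) is a contraction on ℝ^d and admits a unique fixed point θ^PS ∈ ℝ^d with θ^PS = M(θ^PS) (the multi-agent performative stable solution). -/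
open Finset

private lemma gradAux_zero {E : Type*} [NormedAddCommGroup E] [InnerProductSpace ℝ E]
    [CompleteSpace E] {F : E → ℝ} {gF : E} {u : E}
    (hg : HasGradientAt F gF u) (hmin : IsMinOn F Set.univ u) : gF = 0 := by
  have h0 := (hmin.isLocalMin Filter.univ_mem).hasFDerivAt_eq_zero hg.hasFDerivAt
  have := congrArg (InnerProductSpace.toDual ℝ E).symm h0
  simpa using this

private lemma exists_min_of_strongConvex {E : Type*} [NormedAddCommGroup E]
    [InnerProductSpace ℝ E] [FiniteDimensional ℝ E] {F : E → ℝ} {G : E → E} {μ : ℝ}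
    (hμ : 0 < μ) (hgrad : ∀ x, HasGradientAt F (G x) x)
    (hsc : ∀ x y, F y ≥ F x + (inner ℝ (G x) (y - x) : ℝ) + μ / 2 * ‖y - x‖ ^ 2) :
    ∃ u, IsMinOn F Set.univ u := by
  have hFcont : Continuous F := by
    have : Differentiable ℝ F := fun x => (hgrad x).hasFDerivAt.differentiableAt
    exact this.continuous
  set R : ℝ := 2 * ‖G 0‖ / μ + 1 with hR
  have hR0 : 0 ≤ R := by positivity
  obtain ⟨u, hu, humin⟩ := (isCompact_closedBall (0 : E) R).exists_isMinOn
    ⟨0, Metric.mem_closedBall_self hR0⟩ hFcont.continuousOn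
  refine ⟨u, isMinOn_iff.mpr fun x _ => ?_⟩
  by_cases hx : x ∈ Metric.closedBall (0 : E) R
  · exact isMinOn_iff.mp humin x hx
  · have hxR : R < ‖x‖ := by
      simpa [Metric.mem_closedBall, dist_zero_right, not_le] using hx
    have h0 := hsc 0 x
    rw [sub_zero] at h0
    have hin : -(‖G 0‖ * ‖x‖) ≤ (inner ℝ (G 0) x : ℝ) := by
      have h1 := abs_real_inner_le_norm (G 0) x
      have h2 := neg_abs_le (inner ℝ (G 0) x : ℝ)
      linarith
    have hF0 : F u ≤ F 0 := isMinOn_iff.mp humin 0 (Metric.mem_closedBall_self hR0)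
    have hμR : μ * R = 2 * ‖G 0‖ + μ := by
      rw [hR]
      field_simp
    have hmul : R * ‖x‖ ≤ ‖x‖ * ‖x‖ := by nlinarith [norm_nonneg x]
    nlinarith [norm_nonneg x, norm_nonneg (G 0)]

set_option maxHeartbeats 1000000

/-- Existence and uniqueness of the multi-agent performative stable (Multi-PS) solution:
if `ε_avg < μ/L`, the deployment map `M(θ) = argmin_{θ'} (1/n) Σ_i f_i(θ'; θ)` is a
contraction and admits a unique fixed point `θ^PS = M(θ^PS)`. -/
theorem stmt1 {d : ℕ} {ι : Type*} [Fintype ι] [Nonempty ι]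
    (f : ι → EuclideanSpace ℝ (Fin d) → EuclideanSpace ℝ (Fin d) → ℝ)
    (g : ι → EuclideanSpace ℝ (Fin d) → EuclideanSpace ℝ (Fin d) → EuclideanSpace ℝ (Fin d))
    (μ L : ℝ) (ε : ι → ℝ)
    (hμ : 0 < μ) (hL : 0 < L) (hε : ∀ i, 0 < ε i)
    -- each `f i` is continuously differentiable in its first argument with gradient `g i`
    (hgrad : ∀ i θb θ, HasGradientAt (fun x => f i x θb) (g i θ θb) θ)
    (hgradcont : ∀ i θb, Continuous fun θ => g i θ θb)
    -- for every fixed `θb`, the average `f(·; θb)` is `μ`-strongly convex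
    (hsc : ∀ θb θ θ',
      (Fintype.card ι : ℝ)⁻¹ * ∑ i, f i θ' θb ≥
        (Fintype.card ι : ℝ)⁻¹ * ∑ i, f i θ θb
          + (inner ℝ ((Fintype.card ι : ℝ)⁻¹ • ∑ i, g i θ θb) (θ' - θ) : ℝ)
          + μ / 2 * ‖θ' - θ‖ ^ 2)
    -- sensitivity of the gradients in the second (deployed) argument
    (hsens : ∀ i θ₀ θ θ', ‖g i θ₀ θ - g i θ₀ θ'‖ ≤ L * ε i * ‖θ - θ'‖)
    -- the average sensitivity is below the threshold `μ/L`
    (hεavg : (Fintype.card ι : ℝ)⁻¹ * ∑ i, ε i < μ / L) :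
    ∃ M : EuclideanSpace ℝ (Fin d) → EuclideanSpace ℝ (Fin d),
      (∀ θ, IsMinOn (fun θ' => (Fintype.card ι : ℝ)⁻¹ * ∑ i, f i θ' θ) Set.univ (M θ) ∧
        ∀ θ'', IsMinOn (fun θ' => (Fintype.card ι : ℝ)⁻¹ * ∑ i, f i θ' θ) Set.univ θ'' →
          θ'' = M θ) ∧
      (∀ θ θ', ‖M θ - M θ'‖ ≤ ((Fintype.card ι : ℝ)⁻¹ * ∑ i, ε i) * L / μ * ‖θ - θ'‖) ∧
      ((Fintype.card ι : ℝ)⁻¹ * ∑ i, ε i) * L / μ < 1 ∧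
      ∃! θPS : EuclideanSpace ℝ (Fin d), M θPS = θPS := by
  classical
  have hcard : (0 : ℝ) < (Fintype.card ι : ℝ) := by exact_mod_cast Fintype.card_pos
  set c : ℝ := (Fintype.card ι : ℝ)⁻¹ with hc
  have hcpos : 0 < c := inv_pos.mpr hcard
  have hεsum : 0 ≤ ∑ i, ε i := Finset.sum_nonneg fun i _ => (hε i).le
  -- gradient of the average
  have hFgrad : ∀ θb x, HasGradientAt (fun θ' => c * ∑ i, f i θ' θb)
      (c • ∑ i, g i x θb) x := by
    intro θb x
    have hsum : HasFDerivAt (fun y => ∑ i, f i y θb)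
        (∑ i, (InnerProductSpace.toDual ℝ (EuclideanSpace ℝ (Fin d))) (g i x θb)) x :=
      HasFDerivAt.fun_sum fun i _ => (hgrad i θb x).hasFDerivAt
    have hmul := hsum.const_mul c
    rw [hasGradientAt_iff_hasFDerivAt]
    convert hmul using 1
    case e'_9 => rfl
    simp [map_smul, map_sum]
  -- strong convexity restated
  have hsc' : ∀ θb x y, (fun θ' => c * ∑ i, f i θ' θb) y ≥
      (fun θ' => c * ∑ i, f i θ' θb) x
        + (inner ℝ (c • ∑ i, g i x θb) (y - x) : ℝ) + μ / 2 * ‖y - x‖ ^ 2 :=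
    fun θb x y => hsc θb x y
  -- existence and uniqueness of the minimizer for each deployed θb
  have key : ∀ θb : EuclideanSpace ℝ (Fin d),
      ∃ u, IsMinOn (fun θ' => c * ∑ i, f i θ' θb) Set.univ u ∧
        ∀ v, IsMinOn (fun θ' => c * ∑ i, f i θ' θb) Set.univ v → v = u := by
    intro θb
    obtain ⟨u, hu⟩ := exists_min_of_strongConvex (G := fun x => c • ∑ i, g i x θb) hμ
      (hFgrad θb) (hsc' θb)
    refine ⟨u, hu, fun v hv => ?_⟩
    have h1 := hsc θb u v
    have h2 := hsc θb v u
    rw [gradAux_zero (hFgrad θb u) hu] at h1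
    rw [gradAux_zero (hFgrad θb v) hv] at h2
    simp only [inner_zero_left] at h1 h2
    have hrev : ‖u - v‖ = ‖v - u‖ := norm_sub_rev u v
    have hsq : ‖v - u‖ ^ 2 ≤ 0 := by nlinarith
    have : ‖v - u‖ = 0 := by nlinarith [norm_nonneg (v - u), sq_nonneg ‖v - u‖]
    exact sub_eq_zero.mp (norm_eq_zero.mp this)
  set M : EuclideanSpace ℝ (Fin d) → EuclideanSpace ℝ (Fin d) :=
    fun θb => (key θb).choose with hM
  have hMmin : ∀ θb, IsMinOn (fun θ' => c * ∑ i, f i θ' θb) Set.univ (M θb) :=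
    fun θb => (key θb).choose_spec.1
  have hMuniq : ∀ θb v, IsMinOn (fun θ' => c * ∑ i, f i θ' θb) Set.univ v → v = M θb :=
    fun θb v hv => (key θb).choose_spec.2 v hv
  -- the contraction estimate
  have hcontr : ∀ θ θ', ‖M θ - M θ'‖ ≤ (c * ∑ i, ε i) * L / μ * ‖θ - θ'‖ := by
    intro θ θ'
    have hu : c • ∑ i, g i (M θ) θ = 0 := gradAux_zero (hFgrad θ (M θ)) (hMmin θ)
    have hu' : c • ∑ i, g i (M θ') θ' = 0 := gradAux_zero (hFgrad θ' (M θ')) (hMmin θ')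
    have h1 := hsc θ (M θ) (M θ')
    have h2 := hsc θ (M θ') (M θ)
    rw [hu] at h1
    simp only [inner_zero_left] at h1
    -- bound on the gradient perturbation
    have hA : ‖(c • ∑ i, g i (M θ') θ) - (c • ∑ i, g i (M θ') θ')‖
        ≤ (c * ∑ i, ε i) * L * ‖θ - θ'‖ := by
      rw [← smul_sub, ← Finset.sum_sub_distrib, norm_smul, Real.norm_eq_abs,
        abs_of_pos hcpos]
      calc c * ‖∑ i, (g i (M θ') θ - g i (M θ') θ')‖
          ≤ c * ∑ i, ‖g i (M θ') θ - g i (M θ') θ'‖ := by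
            gcongr
            exact norm_sum_le _ _
        _ ≤ c * ∑ i, L * ε i * ‖θ - θ'‖ := by
            gcongr with i
            exact hsens i (M θ') θ θ'
        _ = (c * ∑ i, ε i) * L * ‖θ - θ'‖ := by
            rw [← Finset.sum_mul, ← Finset.mul_sum]
            ring
    have hEq : (inner ℝ (c • ∑ i, g i (M θ') θ) (M θ - M θ') : ℝ)
        = (inner ℝ ((c • ∑ i, g i (M θ') θ) - (c • ∑ i, g i (M θ') θ')) (M θ - M θ') : ℝ) := by
      rw [hu', sub_zero]
    have hib : -(‖(c • ∑ i, g i (M θ') θ) - (c • ∑ i, g i (M θ') θ')‖ * ‖M θ - M θ'‖)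
        ≤ (inner ℝ (c • ∑ i, g i (M θ') θ) (M θ - M θ') : ℝ) := by
      rw [hEq]
      have hab := abs_real_inner_le_norm
        ((c • ∑ i, g i (M θ') θ) - (c • ∑ i, g i (M θ') θ')) (M θ - M θ')
      have hneg := neg_abs_le
        (inner ℝ ((c • ∑ i, g i (M θ') θ) - (c • ∑ i, g i (M θ') θ')) (M θ - M θ') : ℝ)
      linarith
    have hrev : ‖M θ' - M θ‖ ^ 2 = ‖M θ - M θ'‖ ^ 2 := by rw [norm_sub_rev]
    have hinner : μ * ‖M θ - M θ'‖ ^ 2 ≤ (c * ∑ i, ε i) * L * ‖θ - θ'‖ * ‖M θ - M θ'‖ := by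
      nlinarith [mul_le_mul_of_nonneg_right hA (norm_nonneg (M θ - M θ'))]
    rcases eq_or_lt_of_le (norm_nonneg (M θ - M θ')) with h0 | h0
    · rw [← h0]
      positivity
    · rw [div_mul_eq_mul_div, le_div_iff₀ hμ]
      nlinarith
  -- the contraction constant is < 1
  have hk1 : (c * ∑ i, ε i) * L / μ < 1 := by
    rw [div_lt_one hμ]
    exact (lt_div_iff₀ hL).mp hεavg
  have hk0 : 0 ≤ (c * ∑ i, ε i) * L / μ := by positivity
  have hlip : LipschitzWith ⟨(c * ∑ i, ε i) * L / μ, hk0⟩ M :=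
    LipschitzWith.of_dist_le_mul fun x y => by
      rw [dist_eq_norm, dist_eq_norm]; exact hcontr x y
  have hCW : ContractingWith ⟨(c * ∑ i, ε i) * L / μ, hk0⟩ M :=
    ⟨by exact_mod_cast hk1, hlip⟩
  refine ⟨M, fun θ => ⟨hMmin θ, fun θ'' h => hMuniq θ θ'' h⟩, hcontr, hk1,
    ContractingWith.fixedPoint M hCW, hCW.fixedPoint_isFixedPt,
    fun y hy => hCW.fixedPoint_unique hy⟩
end

section
/- For i = 1,…,n let ℓ(θ; z) = (θ − z)²/2 on ℝ × ℝ and let D_i(θ) be the Gaussian distribution N(μ_i + ε_i θ, 1), where μ_i ∈ ℝ and ε_i > 0. Then f_i(θ′; θ) := E_{Z ∼ D_i(θ)}[ℓ(θ′; Z)] = (1/2)(θ′ − μ_i − ε_i θ)² + 1/2, and consequently M(θ) := argmin_{θ′ ∈ ℝ} (1/n)Σ_{i=1}^n f_i(θ′; θ) = ε_avg θ + μ_avg, where ε_avg = (1/n)Σ_i ε_i and μ_avg = (1/n)Σ_i μ_i. Moreover, if ε_avg ≥ 1 and μ_avg ≠ 0, then there exists θ₀ ∈ ℝ such that the iterates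 M^T(θ₀) satisfy lim_{T→∞} |M^T(θ₀)| = ∞; in particular M is not a contraction and, when ε_avg = 1, M has no fixed point. -/
open MeasureTheory ProbabilityTheory Filter Finset
open Real
open scoped NNReal ENNReal

lemma pdf0_eq : gaussianPDFReal 0 1 = fun x => (√(2*π))⁻¹ * rexp (-(2⁻¹) * x^2) := by
  ext x
  simp only [gaussianPDFReal, NNReal.coe_one, mul_one, sub_zero]
  ring_nf

lemma integral_gauss01 (g : ℝ → ℝ) :
    ∫ z, g z ∂(gaussianReal 0 1) = ∫ x, gaussianPDFReal 0 1 x * g x := by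
  rw [gaussianReal_of_var_ne_zero 0 one_ne_zero]
  have h : gaussianPDF 0 1 = fun x => ((Real.toNNReal (gaussianPDFReal 0 1 x) : ℝ≥0) : ℝ≥0∞) := by
    ext x; rw [gaussianPDF, ENNReal.ofReal]
  rw [h, integral_withDensity_eq_integral_smul
    ((measurable_gaussianPDFReal 0 1).real_toNNReal) g]
  refine integral_congr_ae (Filter.Eventually.of_forall fun x => ?_)
  simp [NNReal.smul_def, Real.coe_toNNReal _ (gaussianPDFReal_nonneg 0 1 x)]

lemma integrable_gauss01 (g : ℝ → ℝ)
    (h : Integrable (fun x => gaussianPDFReal 0 1 x * g x)) :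
    Integrable g (gaussianReal 0 1) := by
  rw [gaussianReal_of_var_ne_zero 0 one_ne_zero]
  have h2 : gaussianPDF 0 1 = fun x => ((Real.toNNReal (gaussianPDFReal 0 1 x) : ℝ≥0) : ℝ≥0∞) := by
    ext x; rw [gaussianPDF, ENNReal.ofReal]
  rw [h2, integrable_withDensity_iff_integrable_smul
    ((measurable_gaussianPDFReal 0 1).real_toNNReal)]
  convert h using 2 with x
  · rfl
  simp [NNReal.smul_def, Real.coe_toNNReal _ (gaussianPDFReal_nonneg 0 1 x)]

lemma integrable_id01 : Integrable (fun x : ℝ => x) (gaussianReal 0 1) := by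
  apply integrable_gauss01
  rw [pdf0_eq]
  have := (integrable_mul_exp_neg_mul_sq (b := 2⁻¹) (by norm_num)).const_mul (√(2*π))⁻¹
  convert this using 2 with x
  ring

lemma integrable_sq01 : Integrable (fun x : ℝ => x ^ 2) (gaussianReal 0 1) := by
  apply integrable_gauss01
  rw [pdf0_eq]
  have h := (integrable_rpow_mul_exp_neg_mul_sq (b := 2⁻¹) (by norm_num) (s := 2)
    (by norm_num)).const_mul (√(2*π))⁻¹
  convert h using 2 with x
  rw [show ((2:ℝ)) = ((2:ℕ):ℝ) by norm_num, Real.rpow_natCast]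
  ring

lemma moment1 : ∫ x, x ∂(gaussianReal 0 1) = 0 := by
  rw [integral_gauss01]
  have h : ∫ x, gaussianPDFReal 0 1 x * x
      = ∫ x, gaussianPDFReal 0 1 (-x) * (-x) := (integral_neg_eq_self _ _).symm
  have h2 : ∀ x : ℝ, gaussianPDFReal 0 1 (-x) * (-x) = -(gaussianPDFReal 0 1 x * x) := by
    intro x; rw [pdf0_eq]; simp only; ring_nf
  simp_rw [h2, integral_neg] at h
  linarith

lemma moment2 : ∫ x, x ^ 2 ∂(gaussianReal 0 1) = 1 := by
  rw [integral_gauss01]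
  have h1 : (fun x => gaussianPDFReal 0 1 x * x ^ 2)
      = fun x => (√(2*π))⁻¹ * ((fun t => t^2 * rexp (-(2⁻¹) * t^2)) |x|) := by
    ext x
    rw [pdf0_eq]
    simp only [sq_abs]
    ring
  rw [h1]
  rw [integral_const_mul, integral_comp_abs (f := fun t => t^2 * rexp (-(2⁻¹) * t^2))]
  have h2 : ∫ x in Set.Ioi (0:ℝ), x ^ 2 * rexp (-(2⁻¹) * x ^ 2)
      = (2⁻¹:ℝ) ^ (-(((2:ℝ) + 1)) / 2) * (1 / 2) * Real.Gamma (((2:ℝ) + 1) / 2) := by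
    rw [← integral_rpow_mul_exp_neg_mul_rpow (p := 2) (q := 2) (by norm_num) (by norm_num)
      (by norm_num)]
    refine setIntegral_congr_fun measurableSet_Ioi fun x hx => ?_
    rw [show ((2:ℝ)) = ((2:ℕ):ℝ) by norm_num, Real.rpow_natCast]
  rw [h2]
  have hg : Real.Gamma (((2:ℝ) + 1) / 2) = (1/2) * √π := by
    rw [show ((2:ℝ) + 1) / 2 = 1/2 + 1 by norm_num, Real.Gamma_add_one (by norm_num),
      Real.Gamma_one_half_eq]
  rw [hg]
  have hb : (2⁻¹:ℝ) ^ (-(((2:ℝ) + 1)) / 2) = 2 * √2 := by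
    rw [show (-(((2:ℝ) + 1)) / 2) = -(3/2) by norm_num,
      Real.rpow_neg (by norm_num), Real.inv_rpow (by norm_num), inv_inv,
      show ((3:ℝ)/2) = 1 + 1/2 by norm_num, Real.rpow_add (by norm_num),
      Real.rpow_one, ← Real.sqrt_eq_rpow]
  rw [hb]
  rw [Real.sqrt_mul (by norm_num) π]
  have h2pos : (0:ℝ) < √2 := Real.sqrt_pos.mpr (by norm_num)
  have hppos : (0:ℝ) < √π := Real.sqrt_pos.mpr Real.pi_pos
  field_simp

lemma gauss_expect (m θ' : ℝ) :
    ∫ z, (θ' - z) ^ 2 / 2 ∂(gaussianReal m 1) = (θ' - m) ^ 2 / 2 + 1 / 2 := by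
  have hmap : gaussianReal m 1 = (gaussianReal 0 1).map (· + m) := by
    rw [gaussianReal_map_add_const, zero_add]
  rw [hmap, integral_map (φ := fun x : ℝ => x + m) (by fun_prop)
    (f := fun z : ℝ => (θ' - z) ^ 2 / 2)
    ((by continuity : Continuous fun z : ℝ => (θ' - z) ^ 2 / 2).aestronglyMeasurable)]
  have hfun : (fun x : ℝ => (θ' - (x + m)) ^ 2 / 2)
      = fun x : ℝ => ((θ' - m) ^ 2 / 2 + (-(θ' - m)) * x) + x ^ 2 / 2 := by
    ext x; ring
  have I1 : Integrable (fun _ : ℝ => (θ' - m) ^ 2 / 2) (gaussianReal 0 1) := integrable_const _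
  have I2 : Integrable (fun x : ℝ => -(θ' - m) * x) (gaussianReal 0 1) :=
    integrable_id01.const_mul _
  have I3 : Integrable (fun x : ℝ => x ^ 2 / 2) (gaussianReal 0 1) := integrable_sq01.div_const 2
  have I12 : Integrable (fun x : ℝ => (θ' - m) ^ 2 / 2 + -(θ' - m) * x) (gaussianReal 0 1) :=
    I1.add I2
  rw [hfun, integral_add I12 I3, integral_add I1 I2,
    integral_const, integral_const_mul, moment1, integral_div, moment2]
  simp


/-- The Gaussian mean-estimation instance showing the threshold `ε_avg < μ/L = 1` is
necessary: closed form of `f_i` and `M`, and divergence of the iterates of `M`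
when `ε_avg ≥ 1` and `μ_avg ≠ 0`. -/
theorem stmt2 {ι : Type*} [Fintype ι] [Nonempty ι]
    (μv : ι → ℝ) (ε : ι → ℝ) (hε : ∀ i, 0 < ε i) :
    -- closed form of the expected loss
    (∀ i : ι, ∀ θ θ' : ℝ,
      ∫ z, (θ' - z) ^ 2 / 2 ∂(gaussianReal (μv i + ε i * θ) 1)
        = (θ' - μv i - ε i * θ) ^ 2 / 2 + 1 / 2) ∧
    -- `M(θ) = ε_avg θ + μ_avg` is the unique minimizer of the average expected loss
    (∀ θ : ℝ,
      IsMinOn (fun θ' => (Fintype.card ι : ℝ)⁻¹ *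
          ∑ i, ∫ z, (θ' - z) ^ 2 / 2 ∂(gaussianReal (μv i + ε i * θ) 1)) Set.univ
        (((Fintype.card ι : ℝ)⁻¹ * ∑ i, ε i) * θ + (Fintype.card ι : ℝ)⁻¹ * ∑ i, μv i) ∧
      ∀ θ'' : ℝ, IsMinOn (fun θ' => (Fintype.card ι : ℝ)⁻¹ *
          ∑ i, ∫ z, (θ' - z) ^ 2 / 2 ∂(gaussianReal (μv i + ε i * θ) 1)) Set.univ θ'' →
        θ'' = ((Fintype.card ι : ℝ)⁻¹ * ∑ i, ε i) * θ + (Fintype.card ι : ℝ)⁻¹ * ∑ i, μv i) ∧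
    -- divergence when `ε_avg ≥ 1` and `μ_avg ≠ 0`
    (1 ≤ (Fintype.card ι : ℝ)⁻¹ * ∑ i, ε i → (Fintype.card ι : ℝ)⁻¹ * ∑ i, μv i ≠ 0 →
      (∃ θ₀ : ℝ, Tendsto
          (fun T => |(fun θ => ((Fintype.card ι : ℝ)⁻¹ * ∑ i, ε i) * θ
            + (Fintype.card ι : ℝ)⁻¹ * ∑ i, μv i)^[T] θ₀|) atTop atTop) ∧
      (¬ ∃ K : NNReal, K < 1 ∧ LipschitzWith K
          (fun θ => ((Fintype.card ι : ℝ)⁻¹ * ∑ i, ε i) * θ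
            + (Fintype.card ι : ℝ)⁻¹ * ∑ i, μv i)) ∧
      ((Fintype.card ι : ℝ)⁻¹ * ∑ i, ε i = 1 →
        ¬ ∃ θ : ℝ, ((Fintype.card ι : ℝ)⁻¹ * ∑ i, ε i) * θ
            + (Fintype.card ι : ℝ)⁻¹ * ∑ i, μv i = θ)) := by
  have hcard : (0:ℝ) < (Fintype.card ι : ℝ) := by
    exact_mod_cast Fintype.card_pos
  have hI : ∀ i : ι, ∀ θ θ' : ℝ,
      ∫ z, (θ' - z) ^ 2 / 2 ∂(gaussianReal (μv i + ε i * θ) 1)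
        = (θ' - μv i - ε i * θ) ^ 2 / 2 + 1 / 2 := by
    intro i θ θ'
    rw [gauss_expect]
    ring
  refine ⟨hI, fun θ => ?_, fun ha hb => ?_⟩
  · -- Part 2
    set a : ℝ := (Fintype.card ι : ℝ)⁻¹ * ∑ i, ε i with ha'
    set b : ℝ := (Fintype.card ι : ℝ)⁻¹ * ∑ i, μv i with hb'
    simp only [hI]
    have hexp : ∀ x : ℝ, (Fintype.card ι : ℝ)⁻¹ *
        ∑ i, ((x - μv i - ε i * θ) ^ 2 / 2 + 1 / 2)
        = (x - (a * θ + b)) ^ 2 / 2 +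
          ((Fintype.card ι : ℝ)⁻¹ * ((∑ i, (μv i + ε i * θ) ^ 2) / 2) + 1 / 2
            - (a * θ + b) ^ 2 / 2) := by
      intro x
      have h1 : ∑ i, ((x - μv i - ε i * θ) ^ 2 / 2 + 1 / 2)
          = ∑ i, ((x ^ 2 / 2 + 1 / 2) - x * (μv i + ε i * θ) + (μv i + ε i * θ) ^ 2 / 2) :=
        Finset.sum_congr rfl fun i _ => by ring
      rw [h1, Finset.sum_add_distrib, Finset.sum_sub_distrib, Finset.sum_const,
        Finset.card_univ, nsmul_eq_mul, ← Finset.mul_sum, ← Finset.sum_div,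
        show ∑ i, (μv i + ε i * θ) = (∑ i, μv i) + (∑ i, ε i) * θ by
          rw [Finset.sum_add_distrib, ← Finset.sum_mul], ha', hb']
      field_simp
      ring
    constructor
    · rw [isMinOn_iff]
      intro x _
      rw [hexp, hexp]
      nlinarith [sq_nonneg (x - (a * θ + b))]
    · intro θ'' hmin
      have h := (isMinOn_iff.mp hmin) (a * θ + b) (Set.mem_univ _)
      rw [hexp, hexp] at h
      have h2 : (θ'' - (a * θ + b)) ^ 2 ≤ 0 := by nlinarith
      have h3 : θ'' - (a * θ + b) = 0 :=
        by nlinarith [sq_nonneg (θ'' - (a * θ + b)), sq_abs (θ'' - (a * θ + b)), abs_nonneg (θ'' - (a * θ + b))]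
      linarith
  · -- Part 3
    set a : ℝ := (Fintype.card ι : ℝ)⁻¹ * ∑ i, ε i with ha'
    set b : ℝ := (Fintype.card ι : ℝ)⁻¹ * ∑ i, μv i with hb'
    have key : ∀ T : ℕ, (T:ℝ) * |b| ≤ |(fun θ => a * θ + b)^[T] 0| := by
      rcases lt_or_gt_of_ne hb with hneg | hpos
      · have mono : ∀ T : ℕ, (fun θ => a * θ + b)^[T] 0 ≤ (T:ℝ) * b := by
          intro T
          induction T with
          | zero => simp
          | succ T ih =>
            rw [Function.iterate_succ_apply']
            have hx : (fun θ => a * θ + b)^[T] 0 ≤ 0 :=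
              le_trans ih (by nlinarith [Nat.cast_nonneg (α := ℝ) T])
            have hax : a * (fun θ => a * θ + b)^[T] 0 ≤ (fun θ => a * θ + b)^[T] 0 := by
              nlinarith
            push_cast
            nlinarith
        intro T
        have := mono T
        have habs : (T:ℝ) * |b| = -((T:ℝ) * b) := by
          rw [abs_of_neg hneg]; ring
        rw [habs]
        calc -((T:ℝ) * b) ≤ -((fun θ => a * θ + b)^[T] 0) := by linarith
          _ ≤ |(fun θ => a * θ + b)^[T] 0| := neg_le_abs _
      · have mono : ∀ T : ℕ, (T:ℝ) * b ≤ (fun θ => a * θ + b)^[T] 0 := by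
          intro T
          induction T with
          | zero => simp
          | succ T ih =>
            rw [Function.iterate_succ_apply']
            have hx : (0:ℝ) ≤ (fun θ => a * θ + b)^[T] 0 :=
              le_trans (by positivity) ih
            have hax : (fun θ => a * θ + b)^[T] 0 ≤ a * (fun θ => a * θ + b)^[T] 0 :=
              le_mul_of_one_le_left hx ha
            push_cast
            nlinarith
        intro T
        have := mono T
        rw [abs_of_pos hpos]
        exact le_trans this (le_abs_self _)
    refine ⟨⟨0, ?_⟩, ?_, ?_⟩
    · exact tendsto_atTop_mono key
        ((tendsto_natCast_atTop_atTop).atTop_mul_const (abs_pos.mpr hb))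
    · rintro ⟨K, hK, hL⟩
      have h := hL.dist_le_mul 1 0
      simp only [Real.dist_eq] at h
      rw [show a * 1 + b - (a * 0 + b) = a by ring] at h
      norm_num at h
      have hK1 : (K:ℝ) < 1 := by exact_mod_cast hK
      have h1 : (1:ℝ) ≤ |a| := le_trans ha (le_abs_self a)
      linarith
    · intro h1
      rintro ⟨θf, hθf⟩
      rw [h1, one_mul] at hθf
      exact hb (by linarith)
end

section
/- Let μ̃ > 0, ρ ∈ (0,1], n ≥ 1, σ, ς ≥ 0, c₁, c₂ > 0 be constants, and let {γ_t}_{t≥1} be a nonnegative nonincreasing sequence with sup_{t≥1} γ_t ≤ min{ 4/μ̃, √(ρ²μ̃/(192 c₁(σ² + ς²))), ρ c₁/(4 μ̃ c₁ + ρ c₂) }. Suppose nonnegative sequences {x_t}_{t≥0} and {y_t}_{t≥0} satisfy, for all t ≥ 0: x_{t+1} ≤ (1 − μ̃ γ_{t+1}) x_t + (c₁ γ_{t+1} + c₂ γ_{t+1}²) y_t + (2σ²/n) γ_{t+1}², and y_{t+1} ≤ (1 − ρ/2) y_t + 12(σ² + ς²)(γ_{t+1}²/ρ) x_t + 9(σ²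 + ς²) γ_{t+1}²/ρ. Define L_t = x_t + γ_t (8c₁/ρ) y_t for t ≥ 1 (and L_0 = x_0 + γ_1 (8c₁/ρ) y_0). Then for all t ≥ 0, L_{t+1} ≤ (1 − μ̃ γ_{t+1}/2) L_t + (72 c₁ (σ² + ς²)/ρ²) γ_{t+1}³ + (2σ²/n) γ_{t+1}². -/
open Finset

set_option maxHeartbeats 1000000

/-- Lemma (Convergence of the Lyapunov sequence, one-step recursion):
combining the descent lemma and the consensus error bound. -/
theorem stmt9 (μt ρ : ℝ) (n : ℕ) (σ ς c₁ c₂ : ℝ)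
    (hμt : 0 < μt) (hρ0 : 0 < ρ) (hρ1 : ρ ≤ 1) (hn : 1 ≤ n)
    (hσ : 0 ≤ σ) (hς : 0 ≤ ς) (hc₁ : 0 < c₁) (hc₂ : 0 < c₂)
    (γ : ℕ → ℝ) (hγnn : ∀ t, 1 ≤ t → 0 ≤ γ t)
    (hγmono : ∀ t, 1 ≤ t → γ (t + 1) ≤ γ t)
    (hγbd : ∀ t, 1 ≤ t →
      γ t ≤ min (4 / μt) (min (Real.sqrt (ρ ^ 2 * μt / (192 * c₁ * (σ ^ 2 + ς ^ 2))))
        (ρ * c₁ / (4 * μt * c₁ + ρ * c₂))))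
    (x y : ℕ → ℝ) (hx : ∀ t, 0 ≤ x t) (hy : ∀ t, 0 ≤ y t)
    (hrec1 : ∀ t, x (t + 1) ≤ (1 - μt * γ (t + 1)) * x t
      + (c₁ * γ (t + 1) + c₂ * γ (t + 1) ^ 2) * y t + 2 * σ ^ 2 / n * γ (t + 1) ^ 2)
    (hrec2 : ∀ t, y (t + 1) ≤ (1 - ρ / 2) * y t
      + 12 * (σ ^ 2 + ς ^ 2) * (γ (t + 1) ^ 2 / ρ) * x t + 9 * (σ ^ 2 + ς ^ 2) * γ (t + 1) ^ 2 / ρ)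
    (Lf : ℕ → ℝ)
    (hL0 : Lf 0 = x 0 + γ 1 * (8 * c₁ / ρ) * y 0)
    (hLt : ∀ t, 1 ≤ t → Lf t = x t + γ t * (8 * c₁ / ρ) * y t) :
    ∀ t, Lf (t + 1) ≤ (1 - μt * γ (t + 1) / 2) * Lf t
      + 72 * c₁ * (σ ^ 2 + ς ^ 2) / ρ ^ 2 * γ (t + 1) ^ 3 + 2 * σ ^ 2 / n * γ (t + 1) ^ 2 := by
  intro t
  have ht1 : 1 ≤ t + 1 := Nat.le_add_left 1 t
  have hr1 := hrec1 t
  have hr2 := hrec2 t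
  set g := γ (t + 1) with hgdef
  set S := σ ^ 2 + ς ^ 2 with hSdef
  have hS : 0 ≤ S := by rw [hSdef]; positivity
  have hg0 : 0 ≤ g := hγnn _ ht1
  have hbd := hγbd _ ht1
  rw [le_min_iff, le_min_iff] at hbd
  obtain ⟨hb1, hb2, hb3⟩ := hbd
  rw [← hgdef] at hb1 hb2 hb3
  clear_value g S
  have hden : 0 < 4 * μt * c₁ + ρ * c₂ := by positivity
  have hg3 : g * (4 * μt * c₁ + ρ * c₂) ≤ ρ * c₁ := by
    rw [← le_div_iff₀ hden]; exact hb3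
  have hgρc : 0 ≤ g * (ρ * c₂) := mul_nonneg hg0 (by positivity)
  -- 1 - μt*g/2 ≥ 0
  have hhalf : 0 ≤ 1 - μt * g / 2 := by nlinarith [hg3, hgρc]
  -- coefficient on x t
  have hA : (1 - μt * g) + g * (8 * c₁ / ρ) * (12 * S * (g ^ 2 / ρ)) ≤ 1 - μt * g / 2 := by
    have key : 96 * c₁ * S * g ^ 3 ≤ μt * g / 2 * ρ ^ 2 := by
      rcases eq_or_lt_of_le hS with hS0 | hSpos
      · have h0 : 96 * c₁ * S * g ^ 3 = 0 := by rw [← hS0]; ring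
        rw [h0]
        have : (0:ℝ) ≤ μt * g := mul_nonneg hμt.le hg0
        nlinarith [sq_nonneg ρ]
      · have hpos : (0:ℝ) < 192 * c₁ * S := by
          have := mul_pos (show (0:ℝ) < 192 * c₁ by positivity) hSpos
          linarith [this]
        have hq : g ^ 2 ≤ ρ ^ 2 * μt / (192 * c₁ * S) := by
          have h := pow_le_pow_left₀ hg0 hb2 2
          rwa [Real.sq_sqrt (div_nonneg (by positivity) hpos.le)] at h
        have hq' : g ^ 2 * (192 * c₁ * S) ≤ ρ ^ 2 * μt := by
          rw [← le_div_iff₀ hpos]; exact hq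
        have hint := mul_le_mul_of_nonneg_left hq' hg0
        have e1 : 96 * c₁ * S * g ^ 3 = (g * (g ^ 2 * (192 * c₁ * S))) / 2 := by ring
        have e2 : μt * g / 2 * ρ ^ 2 = (g * (ρ ^ 2 * μt)) / 2 := by ring
        rw [e1, e2]
        linarith [hint]
    have hρ2 : (0:ℝ) < ρ ^ 2 := by positivity
    have heq : g * (8 * c₁ / ρ) * (12 * S * (g ^ 2 / ρ)) = 96 * c₁ * S * g ^ 3 / ρ ^ 2 := by
      field_simp; ring
    rw [heq]
    have := (div_le_iff₀ hρ2).mpr key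
    linarith
  -- coefficient on y t
  have hB : (c₁ * g + c₂ * g ^ 2) + g * (8 * c₁ / ρ) * (1 - ρ / 2)
      ≤ (1 - μt * g / 2) * (g * (8 * c₁ / ρ)) := by
    have key : g * (g * (4 * μt * c₁ + ρ * c₂)) ≤ g * (ρ * c₁) :=
      mul_le_mul_of_nonneg_left hg3 hg0
    have key2 : 0 ≤ g * (ρ * c₁) := mul_nonneg hg0 (by positivity)
    rw [← sub_nonneg]
    have expand : (1 - μt * g / 2) * (g * (8 * c₁ / ρ))
        - ((c₁ * g + c₂ * g ^ 2) + g * (8 * c₁ / ρ) * (1 - ρ / 2))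
        = (3 * (g * (ρ * c₁)) - g * (g * (4 * μt * c₁ + ρ * c₂))) / ρ := by
      field_simp; ring
    rw [expand]
    apply div_nonneg _ hρ0.le
    linarith
  -- constant term
  have hC : g * (8 * c₁ / ρ) * (9 * S * g ^ 2 / ρ) = 72 * c₁ * S / ρ ^ 2 * g ^ 3 := by
    field_simp; ring
  -- previous-step coefficient
  obtain ⟨gh, hLfeq, hggh⟩ : ∃ gh, Lf t = x t + gh * (8 * c₁ / ρ) * y t ∧ g ≤ gh := by
    rcases Nat.eq_zero_or_pos t with rfl | htpos
    · exact ⟨g, by rw [hgdef]; simpa using hL0, le_refl _⟩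
    · refine ⟨γ t, hLt t htpos, ?_⟩
      rw [hgdef]; exact hγmono t htpos
  have hK : 0 ≤ g * (8 * c₁ / ρ) := mul_nonneg hg0 (by positivity)
  have step : Lf (t + 1) ≤ (1 - μt * g) * x t + (c₁ * g + c₂ * g ^ 2) * y t
      + 2 * σ ^ 2 / n * g ^ 2
      + g * (8 * c₁ / ρ) * ((1 - ρ / 2) * y t + 12 * S * (g ^ 2 / ρ) * x t
        + 9 * S * g ^ 2 / ρ) := by
    rw [hLt (t + 1) ht1, ← hgdef]
    exact add_le_add hr1 (mul_le_mul_of_nonneg_left hr2 hK)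
  have hxA := mul_le_mul_of_nonneg_right hA (hx t)
  have hyB := mul_le_mul_of_nonneg_right hB (hy t)
  have hyB2 : (1 - μt * g / 2) * (g * (8 * c₁ / ρ)) * y t
      ≤ (1 - μt * g / 2) * (gh * (8 * c₁ / ρ)) * y t := by
    refine mul_le_mul_of_nonneg_right (mul_le_mul_of_nonneg_left ?_ hhalf) (hy t)
    exact mul_le_mul_of_nonneg_right hggh (by positivity)
  have rearr : (1 - μt * g) * x t + (c₁ * g + c₂ * g ^ 2) * y t + 2 * σ ^ 2 / n * g ^ 2
      + g * (8 * c₁ / ρ) * ((1 - ρ / 2) * y t + 12 * S * (g ^ 2 / ρ) * x t + 9 * S * g ^ 2 / ρ)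
      = ((1 - μt * g) + g * (8 * c₁ / ρ) * (12 * S * (g ^ 2 / ρ))) * x t
        + ((c₁ * g + c₂ * g ^ 2) + g * (8 * c₁ / ρ) * (1 - ρ / 2)) * y t
        + g * (8 * c₁ / ρ) * (9 * S * g ^ 2 / ρ) + 2 * σ ^ 2 / n * g ^ 2 := by ring
  have goalexp : (1 - μt * g / 2) * (x t + gh * (8 * c₁ / ρ) * y t)
      + 72 * c₁ * S / ρ ^ 2 * g ^ 3 + 2 * σ ^ 2 / n * g ^ 2
      = (1 - μt * g / 2) * x t + (1 - μt * g / 2) * (gh * (8 * c₁ / ρ)) * y t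
        + 72 * c₁ * S / ρ ^ 2 * g ^ 3 + 2 * σ ^ 2 / n * g ^ 2 := by ring
  rw [hLfeq, goalexp]
  linarith [step, hxA, hyB, hyB2, hC, rearr]
end

section
/- (Corollary: consensus performative stability when all agents influence every distribution.) Let f_i : ℝ^d × ℝ^{nd} → ℝ for i = 1,…,n be continuously differentiable in their first argument, with gradients ∇f_i taken with respect to the first argument. Assume that for every θ ∈ ℝ^d the function θ′ ↦ (1/n)Σ_{i=1}^n f_i(θ′; 1_n ⊗ θ) is μ-strongly convex (where 1_n ⊗ θ = (θ,…,θ) ∈ ℝ^{nd}), and that for every i and all θ₀ ∈ ℝ^d, ϑ, ϑ′ ∈ ℝ^{nd}, ‖∇f_i(θ₀; ϑ) − ∇f_i(θ₀; ϑ′)‖ ≤ L ε_i ‖ϑ − ϑ′‖ with L > 0, ε_i > 0. Define M(θ) = argmin_{θ′ ∈ ℝ^d} (1/n)Σ_{i=1}^n f_i(θ′; 1_n ⊗ θ). Then ‖M(θ) − M(θ′)‖ ≤ (√n ε_avg L/μ)‖θ − θ′‖ for all θ, θ′, and if √n ε_avg < μ/L (with ε_avg = (1/n)Σ_i ε_i),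 M is a contraction with a unique fixed point θ^PS = M(θ^PS). -/
open Finset

noncomputable def consEmb (ι : Type*) [Fintype ι] (d : ℕ) (v : EuclideanSpace ℝ (Fin d)) :
    EuclideanSpace ℝ (ι × Fin d) := WithLp.toLp 2 (fun q : ι × Fin d => v q.2)

lemma consEmb_norm {d : ℕ} {ι : Type*} [Fintype ι] (v : EuclideanSpace ℝ (Fin d)) :
    ‖consEmb ι d v‖ = Real.sqrt (Fintype.card ι) * ‖v‖ :=
  calc ‖consEmb ι d v‖
      = Real.sqrt (∑ q : ι × Fin d, ‖v q.2‖ ^ 2) := EuclideanSpace.norm_eq _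
    _ = Real.sqrt ((Fintype.card ι : ℝ) * ∑ i : Fin d, ‖v i‖ ^ 2) := by
        rw [Fintype.sum_prod_type]; simp [Finset.sum_const, nsmul_eq_mul]
    _ = Real.sqrt (Fintype.card ι) * ‖v‖ := by
        rw [Real.sqrt_mul (by positivity), EuclideanSpace.norm_eq v]

lemma consEmb_sub {d : ℕ} {ι : Type*} [Fintype ι] (θ θ' : EuclideanSpace ℝ (Fin d)) :
    consEmb ι d θ - consEmb ι d θ' = consEmb ι d (θ - θ') := by
  ext q
  simp [consEmb, PiLp.sub_apply]

lemma contraction_aux {mu S r b : ℝ} (hmu : 0 < mu) (key : mu * r ^ 2 ≤ b * r)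
    (hGb : b ≤ S) (hS0 : 0 ≤ S) (hr : 0 ≤ r) : r * mu ≤ S := by
  rcases eq_or_lt_of_le hr with h | h
  · rw [← h, zero_mul]; exact hS0
  · nlinarith [mul_le_mul_of_nonneg_right hGb h.le]

/-- Corollary: consensus performative stability when the local distributions are
influenced by the concatenated decision vector `ϑ = (θ_1,…,θ_n) ∈ ℝ^{nd}`. -/
theorem stmt15 {d : ℕ} {ι : Type*} [Fintype ι] [Nonempty ι]
    (f : ι → EuclideanSpace ℝ (Fin d) → EuclideanSpace ℝ (ι × Fin d) → ℝ)
    (g : ι → EuclideanSpace ℝ (Fin d) → EuclideanSpace ℝ (ι × Fin d) → EuclideanSpace ℝ (Fin d))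
    (μ L : ℝ) (ε : ι → ℝ)
    (hμ : 0 < μ) (hL : 0 < L) (hε : ∀ i, 0 < ε i)
    -- each `f i` is continuously differentiable in its first argument with gradient `g i`
    (hgrad : ∀ i ϑ θ, HasGradientAt (fun x => f i x ϑ) (g i θ ϑ) θ)
    (hgradcont : ∀ i ϑ, Continuous fun θ => g i θ ϑ)
    -- for every `θ`, the average `θ' ↦ (1/n) Σ_i f_i(θ'; 1_n ⊗ θ)` is `μ`-strongly convex
    (hsc : ∀ θbar θ θ' : EuclideanSpace ℝ (Fin d),
      (Fintype.card ι : ℝ)⁻¹ * ∑ i, f i θ' (WithLp.toLp 2 (fun q : ι × Fin d => θbar q.2)) ≥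
        (Fintype.card ι : ℝ)⁻¹ * ∑ i, f i θ (WithLp.toLp 2 (fun q : ι × Fin d => θbar q.2))
          + (inner ℝ ((Fintype.card ι : ℝ)⁻¹ • ∑ i, g i θ (WithLp.toLp 2 (fun q : ι × Fin d => θbar q.2))) (θ' - θ) : ℝ)
          + μ / 2 * ‖θ' - θ‖ ^ 2)
    -- sensitivity of the gradients in the second (deployed, concatenated) argument
    (hsens : ∀ i θ₀ (ϑ ϑ' : EuclideanSpace ℝ (ι × Fin d)),
      ‖g i θ₀ ϑ - g i θ₀ ϑ'‖ ≤ L * ε i * ‖ϑ - ϑ'‖) :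
    ∃ M : EuclideanSpace ℝ (Fin d) → EuclideanSpace ℝ (Fin d),
      (∀ θ, IsMinOn (fun θ' => (Fintype.card ι : ℝ)⁻¹ * ∑ i, f i θ' (WithLp.toLp 2 (fun q : ι × Fin d => θ q.2)))
          Set.univ (M θ) ∧
        ∀ θ'', IsMinOn (fun θ' => (Fintype.card ι : ℝ)⁻¹ * ∑ i, f i θ' (WithLp.toLp 2 (fun q : ι × Fin d => θ q.2)))
          Set.univ θ'' → θ'' = M θ) ∧
      (∀ θ θ', ‖M θ - M θ'‖ ≤
        Real.sqrt (Fintype.card ι) * ((Fintype.card ι : ℝ)⁻¹ * ∑ i, ε i) * L / μ * ‖θ - θ'‖) ∧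
      (Real.sqrt (Fintype.card ι) * ((Fintype.card ι : ℝ)⁻¹ * ∑ i, ε i) < μ / L →
        Real.sqrt (Fintype.card ι) * ((Fintype.card ι : ℝ)⁻¹ * ∑ i, ε i) * L / μ < 1 ∧
        ∃! θPS : EuclideanSpace ℝ (Fin d), M θPS = θPS) := by
  classical
  have hcard : (0 : ℝ) < (Fintype.card ι : ℝ) := by
    exact_mod_cast Fintype.card_pos
  have hεs : (0 : ℝ) < ∑ i, ε i := Finset.sum_pos (fun i _ => hε i) univ_nonempty
  set c : ℝ := (Fintype.card ι : ℝ)⁻¹ with hc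
  -- the gradient of the averaged objective
  have hGrad : ∀ (ϑ : EuclideanSpace ℝ (ι × Fin d)) (x : EuclideanSpace ℝ (Fin d)),
      HasGradientAt (fun y => c * ∑ i, f i y ϑ) (c • ∑ i, g i x ϑ) x := by
    intro ϑ x
    rw [hasGradientAt_iff_hasFDerivAt, map_smul, map_sum]
    exact (HasFDerivAt.fun_sum fun i _ => (hgrad i ϑ x).hasFDerivAt).const_mul c
  -- at a global minimizer, the gradient vanishes
  have hzero : ∀ (ϑ : EuclideanSpace ℝ (ι × Fin d)) (m : EuclideanSpace ℝ (Fin d)),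
      IsMinOn (fun y => c * ∑ i, f i y ϑ) Set.univ m → (c • ∑ i, g i m ϑ) = 0 := by
    intro ϑ m hm
    have hloc : IsLocalMin (fun y => c * ∑ i, f i y ϑ) m :=
      hm.isLocalMin (by simp)
    have h0 := hloc.hasFDerivAt_eq_zero ((hGrad ϑ m).hasFDerivAt)
    have := congrArg (InnerProductSpace.toDual ℝ (EuclideanSpace ℝ (Fin d))).symm h0
    simpa using this
  -- existence of a global minimizer for each deployed θ
  have hexists : ∀ θbar : EuclideanSpace ℝ (Fin d),
      ∃ m, IsMinOn (fun y => c * ∑ i, f i y (WithLp.toLp 2 (fun q : ι × Fin d => θbar q.2))) Set.univ m := by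
    intro θbar
    set ϑ : EuclideanSpace ℝ (ι × Fin d) := (WithLp.toLp 2 (fun q : ι × Fin d => θbar q.2)) with hϑ
    set F : EuclideanSpace ℝ (Fin d) → ℝ := fun y => c * ∑ i, f i y ϑ with hF
    have hcont : Continuous F := by
      apply continuous_const.mul
      apply continuous_finset_sum
      intro i _
      exact continuous_iff_continuousAt.mpr fun y =>
        ((hgrad i ϑ y).hasFDerivAt.differentiableAt).continuousAt
    set G0 : EuclideanSpace ℝ (Fin d) := c • ∑ i, g i 0 ϑ with hG0
    have hco : ∀ x : EuclideanSpace ℝ (Fin d),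
        F 0 + (inner ℝ G0 x : ℝ) + μ / 2 * ‖x‖ ^ 2 ≤ F x := by
      intro x
      have := hsc θbar 0 x
      simpa [sub_zero] using this
    set R : ℝ := (2 * ‖G0‖ + 2) / μ with hR
    have hRnn : 0 ≤ R := by positivity
    obtain ⟨m, hmball, hmmin⟩ :=
      (isCompact_closedBall (0 : EuclideanSpace ℝ (Fin d)) R).exists_isMinOn
        ⟨0, Metric.mem_closedBall_self hRnn⟩ hcont.continuousOn
    refine ⟨m, isMinOn_iff.mpr fun x _ => ?_⟩
    by_cases hx : x ∈ Metric.closedBall (0 : EuclideanSpace ℝ (Fin d)) R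
    · exact isMinOn_iff.mp hmmin x hx
    · have hxR : R < ‖x‖ := by
        simpa [Metric.mem_closedBall, dist_zero_right] using hx
      have hFm0 : F m ≤ F 0 := isMinOn_iff.mp hmmin 0 (Metric.mem_closedBall_self hRnn)
      have hip : -(‖G0‖ * ‖x‖) ≤ (inner ℝ G0 x : ℝ) := by
        have h1 := abs_real_inner_le_norm G0 x
        have h2 := neg_abs_le (inner ℝ G0 x : ℝ)
        linarith
      have hco' := hco x
      have hμx : 2 * ‖G0‖ + 2 < μ * ‖x‖ := by
        rw [hR, div_lt_iff₀ hμ] at hxR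
        linarith [mul_comm μ ‖x‖]
      nlinarith [norm_nonneg x, norm_nonneg G0]
  choose M hM using hexists
  -- uniqueness of the minimizer
  have huniq : ∀ θ θ'' : EuclideanSpace ℝ (Fin d),
      IsMinOn (fun θ' => c * ∑ i, f i θ' (WithLp.toLp 2 (fun q : ι × Fin d => θ q.2))) Set.univ θ'' → θ'' = M θ := by
    intro θ θ'' h''
    have hz := hzero _ _ (hM θ)
    have hA := hsc θ (M θ) θ''
    rw [hz] at hA
    simp only [inner_zero_left] at hA
    have hle : c * ∑ i, f i θ'' (WithLp.toLp 2 (fun q : ι × Fin d => θ q.2)) ≤ c * ∑ i, f i (M θ) (WithLp.toLp 2 (fun q : ι × Fin d => θ q.2)) :=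
      isMinOn_iff.mp h'' (M θ) trivial
    have hns : ‖θ'' - M θ‖ ^ 2 ≤ 0 := by nlinarith
    have : θ'' - M θ = 0 := by
      have := norm_nonneg (θ'' - M θ)
      have hn0 : ‖θ'' - M θ‖ = 0 := by nlinarith
      exact norm_eq_zero.mp hn0
    exact sub_eq_zero.mp this
  -- Lipschitz estimate
  have hfac0 : 0 ≤ Real.sqrt (Fintype.card ι) * (c * ∑ i, ε i) * L / μ := by
    apply div_nonneg _ hμ.le
    exact mul_nonneg (mul_nonneg (Real.sqrt_nonneg _)
      (mul_nonneg (inv_nonneg.mpr hcard.le) hεs.le)) hL.le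
  have hLip : ∀ θ θ' : EuclideanSpace ℝ (Fin d),
      ‖M θ - M θ'‖ ≤ Real.sqrt (Fintype.card ι) * (c * ∑ i, ε i) * L / μ * ‖θ - θ'‖ := by
    intro θ θ'
    set m := M θ with hm
    set m' := M θ' with hm'
    have hz : (c • ∑ i, g i m (WithLp.toLp 2 (fun q : ι × Fin d => θ q.2))) = 0 := hzero _ _ (hM θ)
    have hz' : (c • ∑ i, g i m' (WithLp.toLp 2 (fun q : ι × Fin d => θ' q.2))) = 0 := hzero _ _ (hM θ')
    clear_value m m'
    set Gv : EuclideanSpace ℝ (Fin d) := c • ∑ i, g i m' (WithLp.toLp 2 (fun q : ι × Fin d => θ q.2)) with hGv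
    -- bound on ‖Gv‖
    have hGb : ‖Gv‖ ≤ Real.sqrt (Fintype.card ι) * (c * ∑ i, ε i) * L * ‖θ - θ'‖ := by
      have h1 : Gv = c • ∑ i, (g i m' (WithLp.toLp 2 (fun q : ι × Fin d => θ q.2)) - g i m' (WithLp.toLp 2 (fun q : ι × Fin d => θ' q.2))) := by
        rw [Finset.sum_sub_distrib, smul_sub, hGv]
        rw [show (c • ∑ i, g i m' (WithLp.toLp 2 (fun q : ι × Fin d => θ' q.2))) = 0 from hz']
        rw [sub_zero]
      have hemb : ‖consEmb ι d θ - consEmb ι d θ'‖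
          = Real.sqrt (Fintype.card ι) * ‖θ - θ'‖ := by
        rw [consEmb_sub, consEmb_norm]
      have hcnn : (0:ℝ) ≤ c := inv_nonneg.mpr hcard.le
      calc ‖Gv‖ = ‖c • ∑ i, (g i m' (WithLp.toLp 2 (fun q : ι × Fin d => θ q.2)) - g i m' (WithLp.toLp 2 (fun q : ι × Fin d => θ' q.2)))‖ := by rw [h1]
        _ ≤ c * ∑ i, ‖g i m' (WithLp.toLp 2 (fun q : ι × Fin d => θ q.2)) - g i m' (WithLp.toLp 2 (fun q : ι × Fin d => θ' q.2))‖ := by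
            rw [norm_smul, Real.norm_eq_abs, abs_of_nonneg hcnn]
            exact mul_le_mul_of_nonneg_left (norm_sum_le _ _) hcnn
        _ ≤ c * ∑ i, L * ε i * (Real.sqrt (Fintype.card ι) * ‖θ - θ'‖) := by
            apply mul_le_mul_of_nonneg_left _ hcnn
            apply Finset.sum_le_sum
            intro i _
            have h := hsens i m' (consEmb ι d θ) (consEmb ι d θ')
            rw [hemb] at h
            exact h
        _ = Real.sqrt (Fintype.card ι) * (c * ∑ i, ε i) * L * ‖θ - θ'‖ := by
            rw [← Finset.sum_mul, ← Finset.mul_sum]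
            ring
    -- strong convexity at the two minimizers
    have hA := hsc θ m m'
    rw [hz] at hA
    simp only [inner_zero_left] at hA
    have hB := hsc θ m' m
    have hCS : -(‖Gv‖ * ‖m - m'‖) ≤ (inner ℝ Gv (m - m') : ℝ) := by
      have h1 := abs_real_inner_le_norm Gv (m - m')
      have h2 := neg_abs_le (inner ℝ Gv (m - m') : ℝ)
      linarith
    have hnr : ‖m' - m‖ = ‖m - m'‖ := norm_sub_rev _ _
    rw [hnr] at hA
    have key : μ * ‖m - m'‖ ^ 2 ≤ ‖Gv‖ * ‖m - m'‖ := by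
      have hB' : c * ∑ i, f i m (WithLp.toLp 2 (fun q : ι × Fin d => θ q.2)) ≥
          c * ∑ i, f i m' (WithLp.toLp 2 (fun q : ι × Fin d => θ q.2)) + (inner ℝ Gv (m - m') : ℝ)
            + μ / 2 * ‖m - m'‖ ^ 2 := hB
      linarith
    clear_value Gv
    have hS0 : 0 ≤ Real.sqrt (Fintype.card ι) * (c * ∑ i, ε i) * L * ‖θ - θ'‖ :=
      mul_nonneg (mul_nonneg (mul_nonneg (Real.sqrt_nonneg _)
        (mul_nonneg (inv_nonneg.mpr hcard.le) hεs.le)) hL.le) (norm_nonneg _)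
    rw [div_mul_eq_mul_div, le_div_iff₀ hμ]
    exact contraction_aux hμ key hGb hS0 (norm_nonneg _)
  refine ⟨M, fun θ => ⟨hM θ, huniq θ⟩, hLip, fun hsmall => ?_⟩
  have hκ1 : Real.sqrt (Fintype.card ι) * (c * ∑ i, ε i) * L / μ < 1 := by
    rw [div_lt_one hμ]
    rw [lt_div_iff₀ hL] at hsmall
    linarith
  refine ⟨hκ1, ?_⟩
  set K : NNReal := ⟨Real.sqrt (Fintype.card ι) * (c * ∑ i, ε i) * L / μ, hfac0⟩ with hK
  have hlip : LipschitzWith K M := by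
    apply LipschitzWith.of_dist_le_mul
    intro x y
    rw [dist_eq_norm, dist_eq_norm]
    exact hLip x y
  have hcontr : ContractingWith K M := ⟨by exact_mod_cast hκ1, hlip⟩
  exact ⟨hcontr.fixedPoint M, hcontr.fixedPoint_isFixedPt,
    fun y hy => hcontr.fixedPoint_unique hy⟩
end
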